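/- Let T be a Hom-finite Krull-Schmidt R-linear triangulated category, A → B → C → ΣA an Auslander-Reiten triangle in T, and U an indecomposable object. Writing [U,X] for the R-length of Hom(U,X), one has [U,A] − [U,B] + [U,C] ≠ 0 if and only if U ≅ C or U ≅ Σ⁻¹C. -/

import Mathlib

open CategoryTheory CategoryTheory.Limits CategoryTheory.Pretriangulated

universe v u

/-- The length of an `R`-module, defined as the Krull dimension of its submodule
lattice, truncated to a natural number (which recovers the usual length for
modules of finite length). -/
noncomputable def rlen (R : Type*) [Ring R] (M : Type*) [AddCommGroup M] [Module R M] : ℕ :=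
  ((Order.krullDim (Submodule R M)).unbotD 0).toNat

section Additive

variable (C : Type u) [Category.{v} C] [Preadditive C] [HasBinaryBiproducts C]

/-- Hom-finiteness over `R`: every Hom-module has finite length. -/
def HomFinite (R : Type*) [CommRing R] [CategoryTheory.Linear R C] : Prop :=
  ∀ X Y : C, IsFiniteLength R (X ⟶ Y)

/-- A Krull-Schmidt category: every object is a finite biproduct of objects with
local endomorphism rings. -/
def KrullSchmidt [HasFiniteBiproducts C] : Prop :=
  ∀ X : C, ∃ (n : ℕ) (f : Fin n → C),
    Nonempty (X ≅ ⨁ f) ∧ ∀ i, IsLocalRing (End (f i))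

/-- `X` is a direct summand of `U`. -/
def IsDirectSummand {C : Type u} [Category.{v} C] [Preadditive C] [HasBinaryBiproducts C]
    (X U : C) : Prop :=
  ∃ Z : C, Nonempty (U ≅ X ⊞ Z)

/-- The free abelian group on isomorphism classes of objects of `C`. -/
def FreeK0 : Type _ := FreeAbelianGroup (Quotient (isIsomorphicSetoid C))

noncomputable instance : AddCommGroup (FreeK0 C) :=
  inferInstanceAs (AddCommGroup (FreeAbelianGroup _))

/-- The subgroup of split relations `[A ⊞ B] - [A] - [B]`. -/
noncomputable def splitSubgroup : AddSubgroup (FreeK0 C) :=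
  AddSubgroup.closure {x | ∃ A B : C,
    x = FreeAbelianGroup.of (Quotient.mk (isIsomorphicSetoid C) (A ⊞ B))
      - FreeAbelianGroup.of (Quotient.mk (isIsomorphicSetoid C) A)
      - FreeAbelianGroup.of (Quotient.mk (isIsomorphicSetoid C) B)}

/-- The split Grothendieck group `K₀(C,0)`. -/
noncomputable def K0 : Type _ := FreeK0 C ⧸ splitSubgroup C

noncomputable instance : AddCommGroup (K0 C) :=
  inferInstanceAs (AddCommGroup (_ ⧸ splitSubgroup C))

/-- The class `[X]` of an object `X` in `K₀(C,0)`. -/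
noncomputable def cls (X : C) : K0 C :=
  QuotientAddGroup.mk (FreeAbelianGroup.of (Quotient.mk (isIsomorphicSetoid C) X))

end Additive

section Triangulated

variable (C : Type u) [Category.{v} C] [Preadditive C] [HasZeroObject C]
  [HasShift C ℤ] [∀ n : ℤ, (shiftFunctor C n).Additive] [Pretriangulated C]
  [HasBinaryBiproducts C]

/-- An Auslander-Reiten triangle. -/
def IsARTriangle (T : Triangle C) : Prop :=
  (T ∈ distTriang C) ∧ Indecomposable T.obj₁ ∧ Indecomposable T.obj₃ ∧ T.mor₃ ≠ 0 ∧
    ∀ ⦃W : C⦄ (t : W ⟶ T.obj₃), ¬ IsSplitEpi t → ∃ t' : W ⟶ T.obj₂, t' ≫ T.mor₂ = t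

/-- The subgroup `Ex(C)` of `K₀(C,0)` generated by distinguished triangles. -/
noncomputable def ExSubgroup : AddSubgroup (K0 C) :=
  AddSubgroup.closure {x | ∃ T, (T ∈ distTriang C) ∧
    x = cls C T.obj₁ - cls C T.obj₂ + cls C T.obj₃}

/-- The subgroup `AR(C)` of `K₀(C,0)` generated by Auslander-Reiten triangles. -/
noncomputable def ARSubgroup : AddSubgroup (K0 C) :=
  AddSubgroup.closure {x | ∃ T, IsARTriangle C T ∧
    x = cls C T.obj₁ - cls C T.obj₂ + cls C T.obj₃}

end Triangulated

/-!
Exactness of the Hom sequence `(U,A) → (U,B) → (U,C) → (U,ΣA)` gives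
`[U,A] - [U,B] + [U,C] = ℓ(ker (U,f)) + ℓ(im (U,h))`, so the sum is nonzero iff one of these two
modules is. By the Auslander-Reiten property, `t ≫ h ≠ 0` holds exactly for the split epimorphisms
`t : W ⟶ C`, and a split epimorphism from an indecomposable object onto a nonzero one is an
isomorphism; hence `im (U,h) ≠ 0` iff `U ≅ C`. After shifting, `ker (U,f) ≠ 0` iff some
`ΣU ⟶ C` has nonzero composite with `h`, that is iff `ΣU ≅ C`.
-/

section Length

variable {R M N P Q : Type*} [Ring R] [AddCommGroup M] [Module R M] [AddCommGroup N]
  [Module R N] [AddCommGroup P] [Module R P] [AddCommGroup Q] [Module R Q]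

lemma natCast_rlen (hM : IsFiniteLength R M) : (rlen R M : ℕ∞) = Module.length R M := by
  rw [rlen, ← Module.coe_length, WithBot.unbotD_coe,
    ENat.natCast_toNat (Module.length_ne_top_iff.mpr hM)]

lemma rlen_ne_zero_iff (hM : IsFiniteLength R M) : rlen R M ≠ 0 ↔ Nontrivial M := by
  rw [← Module.length_pos_iff (R := R), ← natCast_rlen hM, Nat.cast_pos, Nat.pos_iff_ne_zero]

lemma rlen_eq_rlen_ker_add_rlen_range (hM : IsFiniteLength R M) (φ : M →ₗ[R] N) :
    rlen R M = rlen R (LinearMap.ker φ) + rlen R (LinearMap.range φ) := by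
  have hker : IsFiniteLength R (LinearMap.ker φ) :=
    hM.of_injective (LinearMap.ker φ).injective_subtype
  have hrange : IsFiniteLength R (LinearMap.range φ) :=
    hM.of_surjective φ.surjective_rangeRestrict
  apply Nat.cast_injective (R := ℕ∞)
  rw [Nat.cast_add, natCast_rlen hM, natCast_rlen hker, natCast_rlen hrange]
  exact Module.length_eq_add_of_exact _ _ (LinearMap.ker φ).injective_subtype
    φ.surjective_rangeRestrict
    (LinearMap.exact_iff.mpr (by rw [LinearMap.ker_rangeRestrict, Submodule.range_subtype]))

lemma rlen_sub_rlen_add_rlen_ne_zero_iff {φ : M →ₗ[R] N} {ψ : N →ₗ[R] P} {χ : P →ₗ[R] Q}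
    (hM : IsFiniteLength R M) (hN : IsFiniteLength R N) (hP : IsFiniteLength R P)
    (hφψ : Function.Exact φ ψ) (hψχ : Function.Exact ψ χ) :
    (rlen R M : ℤ) - rlen R N + rlen R P ≠ 0 ↔
      Nontrivial (LinearMap.ker φ) ∨ Nontrivial (LinearMap.range χ) := by
  rw [← rlen_ne_zero_iff (hM.of_injective (LinearMap.ker φ).injective_subtype),
    ← rlen_ne_zero_iff (hP.of_surjective χ.surjective_rangeRestrict),
    rlen_eq_rlen_ker_add_rlen_range hM φ, rlen_eq_rlen_ker_add_rlen_range hN ψ,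
    rlen_eq_rlen_ker_add_rlen_range hP χ, hφψ.linearMap_ker_eq, hψχ.linearMap_ker_eq]
  omega

lemma LinearMap.nontrivial_ker_iff (φ : M →ₗ[R] N) :
    Nontrivial (LinearMap.ker φ) ↔ ∃ x ≠ 0, φ x = 0 := by
  rw [Submodule.nontrivial_iff_ne_bot, Submodule.ne_bot_iff]
  simp only [LinearMap.mem_ker, and_comm]

lemma LinearMap.nontrivial_range_iff (φ : M →ₗ[R] N) :
    Nontrivial (LinearMap.range φ) ↔ ∃ x, φ x ≠ 0 := by
  rw [Submodule.nontrivial_iff_ne_bot, ne_eq, LinearMap.range_eq_bot, ← not_forall]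
  exact not_congr LinearMap.ext_iff

end Length

section Shift

variable {C : Type*} [Category C] [HasShift C ℤ]

lemma nonempty_shift_iso_iff (U Y : C) (n : ℤ) :
    Nonempty (U⟦n⟧ ≅ Y) ↔ Nonempty (U ≅ Y⟦-n⟧) :=
  ⟨fun ⟨e⟩ => ⟨(shiftFunctorCompIsoId C n (-n) (add_neg_cancel n)).symm.app U ≪≫
      (shiftFunctor C (-n)).mapIso e⟩,
    fun ⟨e⟩ => ⟨(shiftFunctor C n).mapIso e ≪≫
      (shiftFunctorCompIsoId C (-n) n (neg_add_cancel n)).app Y⟩⟩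

variable [Preadditive C] [HasBinaryBiproducts C] [∀ n : ℤ, (shiftFunctor C n).Additive]

lemma CategoryTheory.Indecomposable.shift {U : C} (hU : Indecomposable U) (n : ℤ) :
    Indecomposable (U⟦n⟧) := by
  have unshift : ∀ X : C, X⟦n⟧⟦-n⟧ ≅ X := (shiftFunctorCompIsoId C n (-n) (add_neg_cancel n)).app
  have reshift : ∀ X : C, X⟦-n⟧⟦n⟧ ≅ X := (shiftFunctorCompIsoId C (-n) n (neg_add_cancel n)).app
  have := preservesBinaryBiproducts_of_preservesBiproducts (shiftFunctor C (-n))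
  refine ⟨fun hz => hU.1 (((shiftFunctor C (-n)).map_isZero hz).of_iso (unshift U).symm),
    fun Y Z e => ?_⟩
  have e' : U ≅ Y⟦-n⟧ ⊞ Z⟦-n⟧ := (unshift U).symm ≪≫ (shiftFunctor C (-n)).mapIso e ≪≫
    (shiftFunctor C (-n)).mapBiprod Y Z
  exact (hU.2 _ _ e').imp (fun hY => ((shiftFunctor C n).map_isZero hY).of_iso (reshift Y).symm)
    (fun hZ => ((shiftFunctor C n).map_isZero hZ).of_iso (reshift Z).symm)

end Shift

section Triangulated

variable {C : Type*} [Category C] [Preadditive C] [HasZeroObject C] [HasShift C ℤ]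
  [∀ n : ℤ, (shiftFunctor C n).Additive] [Pretriangulated C]

lemma CategoryTheory.Pretriangulated.exact_rightComp_mor₁_mor₂ (R : Type*) [Semiring R] [Linear R C]
    (U : C) {T : Triangle C} (hT : T ∈ distTriang C) :
    Function.Exact (Linear.rightComp R U T.mor₁) (Linear.rightComp R U T.mor₂) := fun b => by
  simp only [Linear.rightComp_apply, Set.mem_range]
  constructor
  · intro hb
    obtain ⟨a, rfl⟩ := T.coyoneda_exact₂ hT b hb
    exact ⟨a, rfl⟩
  · rintro ⟨a, rfl⟩
    rw [Category.assoc, comp_distTriang_mor_zero₁₂ _ hT, comp_zero]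

lemma CategoryTheory.Pretriangulated.exists_ne_zero_comp_mor₁_eq_zero_iff {T : Triangle C}
    (hT : T ∈ distTriang C) (U : C) :
    (∃ a : U ⟶ T.obj₁, a ≠ 0 ∧ a ≫ T.mor₁ = 0) ↔
      ∃ t : U⟦(1 : ℤ)⟧ ⟶ T.obj₃, t ≫ T.mor₃ ≠ 0 := by
  constructor
  · rintro ⟨a, ha, haf⟩
    obtain ⟨t, ht⟩ := T.coyoneda_exact₁ hT (a⟦(1 : ℤ)⟧')
      (by rw [← Functor.map_comp, haf, Functor.map_zero])
    refine ⟨t, fun h0 => ha ((shiftFunctor C (1 : ℤ)).map_injective ?_)⟩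
    rw [ht, h0, Functor.map_zero]
  · rintro ⟨t, ht⟩
    obtain ⟨a, ha⟩ := (shiftFunctor C (1 : ℤ)).map_surjective (t ≫ T.mor₃)
    refine ⟨a, fun h0 => ht (by rw [← ha, h0, Functor.map_zero]),
      (shiftFunctor C (1 : ℤ)).map_injective ?_⟩
    rw [Functor.map_comp, ha, Category.assoc, comp_distTriang_mor_zero₃₁ _ hT, comp_zero,
      Functor.map_zero]

/-- The cocone triangle `K ⟶ U ⟶ Y ⟶ K⟦1⟧` of a split epimorphism has zero third morphism, so
it splits as `U ≅ K ⊞ Y`. -/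
lemma CategoryTheory.Indecomposable.isIso_of_isSplitEpi {U Y : C} (hU : Indecomposable U)
    (hY : ¬ IsZero Y) (t : U ⟶ Y) [IsSplitEpi t] : IsIso t := by
  obtain ⟨K, i, δ, hT⟩ := distinguished_cocone_triangle₁ t
  obtain ⟨e, -, -⟩ := exists_iso_binaryBiproduct_of_distTriang _ hT
    (Triangle.mor₃_eq_zero_of_epi₂ _ hT (inferInstanceAs (Epi t)))
  exact (Triangle.isZero₁_iff_isIso₂ _ hT).1 ((hU.2 _ _ e).resolve_right hY)

lemma IsARTriangle.comp_mor₃_ne_zero_iff {T : Triangle C} (hAR : IsARTriangle C T) {W : C}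
    (t : W ⟶ T.obj₃) : t ≫ T.mor₃ ≠ 0 ↔ IsSplitEpi t := by
  obtain ⟨hT, -, -, hmor₃, hfac⟩ := hAR
  refine ⟨fun ht => by_contra fun hsplit => ht ?_, fun _ ht => hmor₃ ?_⟩
  · obtain ⟨t', rfl⟩ := hfac t hsplit
    rw [Category.assoc, comp_distTriang_mor_zero₂₃ _ hT, comp_zero]
  · rw [← cancel_epi t, ht, comp_zero]

lemma IsARTriangle.exists_comp_mor₃_ne_zero_iff {T : Triangle C} (hAR : IsARTriangle C T)
    {U : C} (hU : Indecomposable U) :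
    (∃ t : U ⟶ T.obj₃, t ≫ T.mor₃ ≠ 0) ↔ Nonempty (U ≅ T.obj₃) := by
  simp_rw [hAR.comp_mor₃_ne_zero_iff]
  constructor
  · rintro ⟨t, _⟩
    have := hU.isIso_of_isSplitEpi hAR.2.2.1.1 t
    exact ⟨asIso t⟩
  · rintro ⟨e⟩
    exact ⟨e.hom, inferInstance⟩

end Triangulated

universe w

variable {R : Type w} [CommRing R]
variable {C : Type u} [Category.{v} C] [Preadditive C] [CategoryTheory.Linear R C]
  [HasZeroObject C] [HasShift C ℤ] [∀ n : ℤ, (shiftFunctor C n).Additive]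
  [Pretriangulated C] [HasFiniteBiproducts C] [EssentiallySmall.{v} C]
theorem ar_triangle_alternating_length_ne_zero_iff_general
    (hfin : HomFinite C R)
    {A B Co : C} (f : A ⟶ B) (g : B ⟶ Co) (h : Co ⟶ A⟦(1 : ℤ)⟧)
    (hAR : IsARTriangle C (Triangle.mk f g h)) (U : C) (hU : Indecomposable U) :
    (rlen R (U ⟶ A) : ℤ) - (rlen R (U ⟶ B) : ℤ) + (rlen R (U ⟶ Co) : ℤ) ≠ 0 ↔
      Nonempty (U ≅ Co) ∨ Nonempty (U ≅ (shiftFunctor C (-1 : ℤ)).obj Co) := by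
  have hT := hAR.1
  have hfg : Function.Exact (Linear.rightComp R U f) (Linear.rightComp R U g) :=
    exact_rightComp_mor₁_mor₂ R U hT
  have hgh : Function.Exact (Linear.rightComp R U g) (Linear.rightComp R U h) :=
    exact_rightComp_mor₁_mor₂ R U (rot_of_distTriang _ hT)
  have hker : (∃ a : U ⟶ A, a ≠ 0 ∧ a ≫ f = 0) ↔ Nonempty (U ≅ Co⟦(-1 : ℤ)⟧) :=
    (exists_ne_zero_comp_mor₁_eq_zero_iff hT U).trans <|
      (hAR.exists_comp_mor₃_ne_zero_iff (hU.shift 1)).trans (nonempty_shift_iso_iff _ _ _)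
  rw [rlen_sub_rlen_add_rlen_ne_zero_iff (hfin U A) (hfin U B) (hfin U Co) hfg hgh,
    LinearMap.nontrivial_ker_iff, LinearMap.nontrivial_range_iff, or_comm]
  simp only [Linear.rightComp_apply]
  exact or_congr (hAR.exists_comp_mor₃_ne_zero_iff hU) hker

/-- In a Hom-finite Krull-Schmidt `R`-linear triangulated category, for an
Auslander-Reiten triangle `A ⟶ B ⟶ C ⟶ ΣA` and an indecomposable `U`, one has
`[U,A] - [U,B] + [U,C] ≠ 0` iff `U ≅ C` or `U ≅ Σ⁻¹C`. -/
theorem ar_triangle_alternating_length_ne_zero_iff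
    (hfin : HomFinite C R) (hKS : KrullSchmidt C)
    {A B Co : C} (f : A ⟶ B) (g : B ⟶ Co) (h : Co ⟶ A⟦(1 : ℤ)⟧)
    (hAR : IsARTriangle C (Triangle.mk f g h)) (U : C) (hU : Indecomposable U) :
    (rlen R (U ⟶ A) : ℤ) - (rlen R (U ⟶ B) : ℤ) + (rlen R (U ⟶ Co) : ℤ) ≠ 0 ↔
      Nonempty (U ≅ Co) ∨ Nonempty (U ≅ (shiftFunctor C (-1 : ℤ)).obj Co) :=
  ar_triangle_alternating_length_ne_zero_iff_general hfin f g h hAR U hU
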